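/- Let m ≥ 2, n = 2^m − 1, and let Z ⊆ {0,1}^n be a code of size N = 2^{n−m} whose dual distance distribution satisfies A^⊥_{(n+1)/2} = n and A^⊥_i = 0 for every i ∈ {1,…,n} with i ≠ (n+1)/2 (this holds for the Hamming code of length n). Then the quadratic discrepancy equals D^{L2}(Z) = (n/2^n)·C(n−1, (n−1)/2). -/

import Mathlib

/-- The quadratic discrepancy of a code `Z ⊆ {0,1}^n`. -/
noncomputable def disc (n : ℕ) (Z : Finset (Fin n → Bool)) : ℝ :=
  ∑ t ∈ Finset.range (n + 1), ∑ x : Fin n → Bool,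
    ((Z.card : ℝ)⁻¹ * ((Z.filter (fun z => hammingDist x z ≤ t)).card : ℝ)
      - ((2 : ℝ) ^ n)⁻¹ *
          ((Finset.univ.filter (fun z : Fin n → Bool => hammingDist x z ≤ t)).card : ℝ)) ^ 2

/-- The distance distribution `A_w = (1/N)·|{(z,z') ∈ Z×Z : d(z,z') = w}|` of a code. -/
noncomputable def distDistr (n : ℕ) (Z : Finset (Fin n → Bool)) (w : ℕ) : ℝ :=
  (Z.card : ℝ)⁻¹ * (((Z ×ˢ Z).filter (fun p => hammingDist p.1 p.2 = w)).card : ℝ)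

/-- The Krawtchouk polynomial `K_k^{(n)}(x) = Σ_{i=0}^k (−1)^i·C(x,i)·C(n−x,k−i)`. -/
def kraw (n k x : ℕ) : ℤ :=
  ∑ i ∈ Finset.range (k + 1),
    (-1 : ℤ) ^ i * (Nat.choose x i : ℤ) * (Nat.choose (n - x) (k - i) : ℤ)

/-- The dual distance distribution `A_w^⊥ = (1/N)·Σ_{i=0}^n K_w^{(n)}(i)·A_i` of a code. -/
noncomputable def dualDistDistr (n : ℕ) (Z : Finset (Fin n → Bool)) (w : ℕ) : ℝ :=
  (Z.card : ℝ)⁻¹ * ∑ i ∈ Finset.range (n + 1), (kraw n w i : ℝ) * distDistr n Z i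

/-! Expand the indicators of Hamming balls in the Walsh basis `χ_S(x) = (-1)^{|S ∩ x|}` of
`{0,1}^n`. The coefficient of `1_{B(·,t)}` at a frequency `S` depends only on `w = |S|`: it is
`2^{-n} G_t(w)` with `G_t(w) = Σ_{i ≤ t} K_i(w)`. By Parseval, the discrepancy becomes
`2^{-n} Σ_{w=1}^n (Σ_t G_t(w)²) A^⊥_w`, because `A^⊥_w` is the sum of the squared normalized
Walsh coefficients of `Z` over the frequencies of weight `w`. Under the hypothesis on the dual
distance distribution only `w = (n+1)/2 = M + 1` survives, and then `G_t(w)` is the `t`-th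
coefficient of `(1-X)^M (1+X)^M = (1-X²)^M`, whose squared coefficients sum to `C(2M, M)`. -/

open Finset Polynomial

section BooleanRing

variable {ι β : Type*} [BooleanRing β]

lemma pi_add_eq_zero_iff_eq (x y : ι → β) : x + y = 0 ↔ x = y := by
  simp only [funext_iff, Pi.add_apply, Pi.zero_apply, BooleanRing.add_eq_zero']

lemma hammingDist_eq_hammingNorm_add [Fintype ι] [DecidableEq β] (x y : ι → β) :
    hammingDist x y = hammingNorm (x + y) := by
  rw [hammingDist_eq_hammingNorm, show -x = x from funext fun i => BooleanRing.neg_eq _]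

end BooleanRing

section Walsh

variable {n : ℕ}

/-- The Walsh character `χ_S(x) = (-1)^{|S ∩ x|}`; on `Bool` the ring operations are `xor` and
`and`. -/
def walsh (S x : Fin n → Bool) : ℤ := ∏ i, if S i * x i = 0 then 1 else -1

lemma walsh_comm (S x : Fin n → Bool) : walsh S x = walsh x S := by
  simp only [walsh, mul_comm]

lemma walsh_add_right (S x y : Fin n → Bool) : walsh S (x + y) = walsh S x * walsh S y := by
  have sign_add : ∀ a b c : Bool, (if a * (b + c) = 0 then (1 : ℤ) else -1)
      = (if a * b = 0 then 1 else -1) * (if a * c = 0 then 1 else -1) := by decide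
  simp only [walsh, ← prod_mul_distrib, Pi.add_apply]
  exact prod_congr rfl fun i _ => sign_add _ _ _

lemma walsh_add_left (S T x : Fin n → Bool) : walsh (S + T) x = walsh S x * walsh T x := by
  simp only [walsh_comm _ x, walsh_add_right]

lemma walsh_zero_left (x : Fin n → Bool) : walsh 0 x = 1 := by
  simp only [walsh, Pi.zero_apply, zero_mul, if_true, prod_const_one]

lemma sum_walsh (S : Fin n → Bool) : ∑ x, walsh S x = if S = 0 then 2 ^ n else 0 := by
  simp only [walsh]
  rw [← Fintype.piFinset_univ,
    ← prod_univ_sum (fun _ => univ) fun i b => if S i * b = 0 then 1 else -1]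
  split_ifs with hS
  · simp [hS]
  · obtain ⟨i, hi⟩ : ∃ i, S i ≠ 0 := by simpa [funext_iff] using hS
    refine prod_eq_zero (mem_univ i) ?_
    revert hi
    cases S i <;> decide

lemma sum_walsh_mul_walsh (S T : Fin n → Bool) :
    ∑ x, walsh S x * walsh T x = if S = T then 2 ^ n else 0 := by
  simp only [← walsh_add_left, sum_walsh, pi_add_eq_zero_iff_eq]

lemma sum_sq_sum_mul_walsh (a : (Fin n → Bool) → ℝ) :
    ∑ x, (∑ S, a S * walsh S x) ^ 2 = 2 ^ n * ∑ S, a S ^ 2 := by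
  have orthogonal (S T : Fin n → Bool) :
      ∑ x, (walsh S x : ℝ) * walsh T x = if S = T then 2 ^ n else 0 := by
    exact_mod_cast congrArg (Int.cast : ℤ → ℝ) (sum_walsh_mul_walsh S T)
  calc ∑ x, (∑ S, a S * walsh S x) ^ 2
      = ∑ S, ∑ T, a S * a T * ∑ x, (walsh S x : ℝ) * walsh T x := by
        simp_rw [sq, sum_mul_sum, mul_sum]
        rw [sum_comm]
        refine sum_congr rfl fun S _ => ?_
        rw [sum_comm]
        exact sum_congr rfl fun T _ => sum_congr rfl fun x _ => by ring
    _ = 2 ^ n * ∑ S, a S ^ 2 := by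
        simp_rw [orthogonal, mul_ite, mul_zero, sum_ite_eq, mem_univ, if_true, mul_sum, sq]
        exact sum_congr rfl fun S _ => by ring

end Walsh

section Krawtchouk

variable {n : ℕ}

lemma coeff_one_sub_X_pow {R : Type*} [CommRing R] (w k : ℕ) :
    ((1 - X : R[X]) ^ w).coeff k = (-1) ^ k * w.choose k := by
  have neg_X_pow (m : ℕ) : (-X : R[X]) ^ m = C ((-1) ^ m) * X ^ m := by
    rw [neg_pow, map_pow, map_neg, map_one]
  rw [sub_eq_neg_add, add_pow, finsetSum_coeff]
  simp_rw [one_pow, mul_one, neg_X_pow, ← C_eq_natCast, mul_right_comm _ (X ^ _), ← C_mul,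
    coeff_C_mul_X_pow]
  rw [sum_ite_eq]
  split_ifs with h
  · rfl
  · rw [mem_range, not_lt] at h
    simp [Nat.choose_eq_zero_of_lt h]

lemma kraw_eq_coeff (n k w : ℕ) :
    kraw n k w = ((1 - X : ℤ[X]) ^ w * (1 + X) ^ (n - w)).coeff k := by
  rw [coeff_mul, Nat.sum_antidiagonal_eq_sum_range_succ_mk, kraw]
  simp [coeff_one_sub_X_pow, coeff_one_add_X_pow]

lemma card_filter_eq_zero_eq_card_sub_hammingNorm {ι β : Type*} [Fintype ι] [Zero β]
    [DecidableEq β] (u : ι → β) : #{i | u i = 0} = Fintype.card ι - hammingNorm u := by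
  have := card_filter_add_card_filter_not (s := univ) (fun i => u i = 0)
  simp only [card_univ] at this
  simp only [hammingNorm, ne_eq]
  omega

lemma sum_walsh_mul_X_pow (u : Fin n → Bool) :
    ∑ S, C (walsh S u) * X ^ hammingNorm S
      = (1 - X) ^ hammingNorm u * (1 + X) ^ (n - hammingNorm u) := by
  have factor (S : Fin n → Bool) : C (walsh S u) * X ^ hammingNorm S
      = ∏ i, C (if S i * u i = 0 then 1 else -1) * X ^ (if S i ≠ 0 then 1 else 0) := by
    rw [prod_mul_distrib, walsh, map_prod, hammingNorm, card_filter, prod_pow_eq_pow_sum]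
  calc ∑ S, C (walsh S u) * X ^ hammingNorm S
      = ∏ i, ∑ b, C (if b * u i = 0 then 1 else -1) * X ^ (if b ≠ 0 then 1 else 0) := by
        rw [prod_univ_sum, Fintype.piFinset_univ]
        exact sum_congr rfl fun S _ => factor S
    _ = ∏ i, if u i = 0 then 1 + X else 1 - X := by
        refine prod_congr rfl fun i _ => ?_
        cases u i <;> simp +decide <;> ring
    _ = _ := by
        rw [prod_ite, prod_const, prod_const, card_filter_eq_zero_eq_card_sub_hammingNorm,
          Fintype.card_fin, mul_comm]
        rfl

lemma kraw_hammingNorm_eq_sum_walsh (k : ℕ) (u : Fin n → Bool) :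
    kraw n k (hammingNorm u) = ∑ S with hammingNorm S = k, walsh S u := by
  rw [kraw_eq_coeff, ← sum_walsh_mul_X_pow, finsetSum_coeff, sum_filter]
  simp_rw [coeff_C_mul_X_pow, eq_comm]

lemma sum_kraw_mul_walsh (k : ℕ) (u : Fin n → Bool) :
    ∑ S, kraw n k (hammingNorm S) * walsh S u = if hammingNorm u = k then 2 ^ n else 0 := by
  calc ∑ S, kraw n k (hammingNorm S) * walsh S u
      = ∑ y with hammingNorm y = k, ∑ S, walsh y S * walsh u S := by
        simp_rw [kraw_hammingNorm_eq_sum_walsh, sum_mul, walsh_comm _ u]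
        exact sum_comm
    _ = _ := by simp_rw [sum_walsh_mul_walsh, sum_ite_eq', mem_filter, mem_univ, true_and]

end Krawtchouk

section Ball

variable {n : ℕ}

/-- `2^n` times the Walsh coefficient of the indicator of a Hamming ball of radius `t`, at a
frequency of weight `w`. -/
def ballCoeff (n t w : ℕ) : ℤ := ∑ i ∈ range (t + 1), kraw n i w

def walshSum (W : Finset (Fin n → Bool)) (S : Fin n → Bool) : ℤ := ∑ z ∈ W, walsh S z

lemma sum_ballCoeff_mul_walsh (t : ℕ) (u : Fin n → Bool) :
    ∑ S, ballCoeff n t (hammingNorm S) * walsh S u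
      = if hammingNorm u ≤ t then 2 ^ n else 0 := by
  simp_rw [ballCoeff, sum_mul]
  rw [sum_comm]
  simp_rw [sum_kraw_mul_walsh, sum_ite_eq, mem_range, Nat.lt_succ_iff]

lemma card_filter_hammingDist_le (W : Finset (Fin n → Bool)) (x : Fin n → Bool) (t : ℕ) :
    2 ^ n * #{z ∈ W | hammingDist x z ≤ t}
      = ∑ S, ballCoeff n t (hammingNorm S) * walsh S x * walshSum W S := by
  simp_rw [walshSum, mul_sum, mul_assoc, ← walsh_add_right]
  rw [sum_comm]
  simp_rw [sum_ballCoeff_mul_walsh, hammingDist_eq_hammingNorm_add, card_filter]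
  push_cast
  simp_rw [mul_sum, mul_ite, mul_one, mul_zero]

end Ball

section DualDistance

variable {n : ℕ}

lemma sum_kraw_mul_card_filter_hammingDist (Z : Finset (Fin n → Bool)) (w : ℕ) :
    ∑ i ∈ range (n + 1), kraw n w i * #{p ∈ Z ×ˢ Z | hammingDist p.1 p.2 = i}
      = ∑ S with hammingNorm S = w, walshSum Z S ^ 2 := by
  calc ∑ i ∈ range (n + 1), kraw n w i * #{p ∈ Z ×ˢ Z | hammingDist p.1 p.2 = i}
      = ∑ p ∈ Z ×ˢ Z, kraw n w (hammingDist p.1 p.2) := by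
        have maps_to (p : (Fin n → Bool) × (Fin n → Bool)) (_ : p ∈ Z ×ˢ Z) :
            hammingDist p.1 p.2 ∈ range (n + 1) := by
          simpa [Nat.lt_succ_iff] using hammingDist_le_card_fintype (x := p.1) (y := p.2)
        rw [← sum_fiberwise_of_maps_to' maps_to (kraw n w)]
        simp_rw [sum_const, nsmul_eq_mul, mul_comm]
    _ = ∑ S with hammingNorm S = w, walshSum Z S ^ 2 := by
        simp_rw [hammingDist_eq_hammingNorm_add, kraw_hammingNorm_eq_sum_walsh, walsh_add_right]
        rw [sum_comm]
        simp_rw [walshSum, sq, sum_mul_sum, sum_product]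

lemma dualDistDistr_eq_sum_walshSum_sq (Z : Finset (Fin n → Bool)) (w : ℕ) :
    dualDistDistr n Z w
      = (#Z : ℝ)⁻¹ ^ 2 * ∑ S with hammingNorm S = w, (walshSum Z S : ℝ) ^ 2 := by
  have h := congrArg (Int.cast : ℤ → ℝ) (sum_kraw_mul_card_filter_hammingDist Z w)
  push_cast at h
  rw [dualDistDistr, sq, mul_assoc, ← h, mul_sum]
  simp_rw [distDistr, mul_sum]
  exact sum_congr rfl fun i _ => by ring

end DualDistance

section Discrepancy

variable {n : ℕ}

noncomputable def localDisc (Z : Finset (Fin n → Bool)) (t : ℕ) (x : Fin n → Bool) : ℝ :=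
  (#Z : ℝ)⁻¹ * #{z ∈ Z | hammingDist x z ≤ t}
    - ((2 : ℝ) ^ n)⁻¹ * #{z | hammingDist x z ≤ t}

/-- The Walsh coefficient of the empirical measure of `Z` minus the uniform measure. -/
noncomputable def walshBias (Z : Finset (Fin n → Bool)) (S : Fin n → Bool) : ℝ :=
  (#Z : ℝ)⁻¹ * walshSum Z S - if S = 0 then 1 else 0

lemma localDisc_eq_sum_walsh (Z : Finset (Fin n → Bool)) (t : ℕ) (x : Fin n → Bool) :
    localDisc Z t x = ∑ S,
      ((2 : ℝ) ^ n)⁻¹ * ballCoeff n t (hammingNorm S) * walshBias Z S * walsh S x := by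
  have card_ball (W : Finset (Fin n → Bool)) : (#{z ∈ W | hammingDist x z ≤ t} : ℝ)
      = ((2 : ℝ) ^ n)⁻¹ *
        ∑ S, (ballCoeff n t (hammingNorm S) : ℝ) * walsh S x * walshSum W S := by
    rw [eq_inv_mul_iff_mul_eq₀ (by positivity)]
    exact_mod_cast card_filter_hammingDist_le W x t
  have walshSum_univ (S : Fin n → Bool) :
      ((2 : ℝ) ^ n)⁻¹ * walshSum univ S = if S = 0 then 1 else 0 := by
    rw [walshSum, sum_walsh]
    split_ifs <;> simp
  rw [localDisc, card_ball, card_ball, mul_sum, mul_sum, mul_sum, mul_sum, ← sum_sub_distrib]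
  refine sum_congr rfl fun S _ => ?_
  rw [walshBias, ← walshSum_univ]
  ring

lemma disc_eq_sum_walshBias (Z : Finset (Fin n → Bool)) :
    disc n Z = ((2 : ℝ) ^ n)⁻¹ * ∑ S,
      (∑ t ∈ range (n + 1), (ballCoeff n t (hammingNorm S) : ℝ) ^ 2) * walshBias Z S ^ 2 := by
  change ∑ t ∈ range (n + 1), ∑ x, localDisc Z t x ^ 2 = _
  simp_rw [localDisc_eq_sum_walsh, sum_sq_sum_mul_walsh, mul_sum, sum_mul]
  rw [sum_comm]
  refine sum_congr rfl fun S _ => ?_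
  rw [mul_sum]
  exact sum_congr rfl fun t _ => by field_simp

lemma walshBias_zero {Z : Finset (Fin n → Bool)} (hZ : Z.Nonempty) : walshBias Z 0 = 0 := by
  simp [walshBias, walshSum, walsh_zero_left, hZ.card_pos.ne']

lemma sum_sq_walshBias_eq_dualDistDistr (Z : Finset (Fin n → Bool)) {w : ℕ} (hw : w ≠ 0) :
    ∑ S with hammingNorm S = w, walshBias Z S ^ 2 = dualDistDistr n Z w := by
  rw [dualDistDistr_eq_sum_walshSum_sq, mul_sum]
  refine sum_congr rfl fun S hS => ?_
  have hS0 : S ≠ 0 := by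
    rintro rfl
    exact hw (by simpa using (mem_filter.1 hS).2.symm)
  rw [walshBias, if_neg hS0, sub_zero, mul_pow]

lemma disc_eq_sum_dualDistDistr {Z : Finset (Fin n → Bool)} (hZ : Z.Nonempty) :
    disc n Z = ((2 : ℝ) ^ n)⁻¹ * ∑ w ∈ Icc 1 n,
      (∑ t ∈ range (n + 1), (ballCoeff n t w : ℝ) ^ 2) * dualDistDistr n Z w := by
  rw [disc_eq_sum_walshBias]
  congr 1
  rw [← sum_filter_of_ne (p := fun S => hammingNorm S ∈ Icc 1 n),
    ← sum_fiberwise_eq_sum_filter]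
  · refine sum_congr rfl fun w hw => ?_
    rw [← sum_sq_walshBias_eq_dualDistDistr Z (by simp at hw; omega), mul_sum]
    exact sum_congr rfl fun S hS => by rw [(mem_filter.1 hS).2]
  · intro S _ hS
    have hS0 : S ≠ 0 := by
      rintro rfl
      simp [walshBias_zero hZ] at hS
    simpa [Nat.one_le_iff_ne_zero, hS0] using hammingNorm_le_card_fintype (x := S)

end Discrepancy

lemma sum_range_coeff_one_sub_X_mul {R : Type*} [CommRing R] (P : R[X]) (t : ℕ) :
    ∑ i ∈ range (t + 1), ((1 - X) * P).coeff i = P.coeff t := by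
  induction t with
  | zero => simp [mul_coeff_zero]
  | succ t ih => rw [sum_range_succ, ih, sub_mul, one_mul, coeff_sub, coeff_X_mul]; ring

lemma ballCoeff_succ_eq_coeff (n t w : ℕ) :
    ballCoeff n t (w + 1) = ((1 - X : ℤ[X]) ^ w * (1 + X) ^ (n - (w + 1))).coeff t := by
  simp_rw [ballCoeff, kraw_eq_coeff, pow_succ', mul_assoc, sum_range_coeff_one_sub_X_mul]

lemma sum_range_sq_coeff_expand_two {R : Type*} [CommSemiring R] (P : R[X]) (T : ℕ) :
    ∑ t ∈ range (2 * T), (expand R 2 P).coeff t ^ 2 = ∑ s ∈ range T, P.coeff s ^ 2 := by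
  induction T with
  | zero => simp
  | succ T ih =>
    have odd_coeff : (expand R 2 P).coeff (2 * T + 1) = 0 := by
      rw [coeff_expand two_pos, if_neg (by omega)]
    rw [mul_add_one, sum_range_succ, sum_range_succ, ih, coeff_expand_mul' two_pos, odd_coeff,
      sum_range_succ]
    ring

lemma sum_range_sq_ballCoeff_middle (M : ℕ) :
    ∑ t ∈ range (2 * M + 2), ballCoeff (2 * M + 1) t (M + 1) ^ 2 = (2 * M).choose M := by
  have one_sub_X_sq : (1 - X : ℤ[X]) ^ M * (1 + X) ^ (2 * M + 1 - (M + 1))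
      = expand ℤ 2 ((1 - X) ^ M) := by
    rw [show 2 * M + 1 - (M + 1) = M by omega, ← mul_pow, map_pow, map_sub, map_one, expand_X]
    ring
  simp_rw [ballCoeff_succ_eq_coeff, one_sub_X_sq, show 2 * M + 2 = 2 * (M + 1) by ring,
    sum_range_sq_coeff_expand_two, coeff_one_sub_X_pow, mul_pow, pow_right_comm _ _ 2, neg_one_sq,
    one_pow, one_mul]
  exact_mod_cast Nat.sum_range_choose_sq M

theorem discrepancy_hamming_code_general (m n : ℕ) (hm : 2 ≤ m) (hn : n = 2 ^ m - 1)
    (Z : Finset (Fin n → Bool))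
    (hdual1 : dualDistDistr n Z ((n + 1) / 2) = (n : ℝ))
    (hdual2 : ∀ i : ℕ, 1 ≤ i → i ≤ n → i ≠ (n + 1) / 2 → dualDistDistr n Z i = 0) :
    disc n Z = (n : ℝ) / 2 ^ n * Nat.choose (n - 1) ((n - 1) / 2) := by
  obtain ⟨M, rfl⟩ : ∃ M, n = 2 * M + 1 := by
    obtain ⟨k, rfl⟩ := Nat.exists_eq_add_of_le' (by omega : 1 ≤ m)
    exact ⟨2 ^ k - 1, by rw [hn, pow_succ]; have := Nat.one_le_two_pow (n := k); omega⟩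
  rw [show (2 * M + 1 + 1) / 2 = M + 1 by omega] at hdual1 hdual2
  have hZ : Z.Nonempty := by
    rw [nonempty_iff_ne_empty]
    rintro rfl
    simp [dualDistDistr] at hdual1
    linarith
  have middle : ∑ t ∈ range (2 * M + 1 + 1), (ballCoeff (2 * M + 1) t (M + 1) : ℝ) ^ 2
      = (2 * M).choose M := by
    exact_mod_cast sum_range_sq_ballCoeff_middle M
  rw [disc_eq_sum_dualDistDistr hZ, sum_eq_single (M + 1)
      (fun w hw hne => by rw [mem_Icc] at hw; rw [hdual2 w hw.1 hw.2 hne, mul_zero])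
      (fun h => absurd (mem_Icc.2 ⟨by omega, by omega⟩) h),
    middle, hdual1, show 2 * M + 1 - 1 = 2 * M by omega, show 2 * M / 2 = M by omega]
  field_simp

/-- For `m ≥ 2`, `n = 2^m − 1`, a code `Z ⊆ {0,1}^n` of size `N = 2^{n−m}` whose dual distance
distribution satisfies `A^⊥_{(n+1)/2} = n` and `A^⊥_i = 0` for `1 ≤ i ≤ n`, `i ≠ (n+1)/2`
(e.g. the Hamming code) has quadratic discrepancy `D^{L2}(Z) = (n/2^n)·C(n−1,(n−1)/2)`. -/
theorem discrepancy_hamming_code (m n : ℕ) (hm : 2 ≤ m) (hn : n = 2 ^ m - 1)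
    (Z : Finset (Fin n → Bool)) (hN : Z.card = 2 ^ (n - m))
    (hdual1 : dualDistDistr n Z ((n + 1) / 2) = (n : ℝ))
    (hdual2 : ∀ i : ℕ, 1 ≤ i → i ≤ n → i ≠ (n + 1) / 2 → dualDistDistr n Z i = 0) :
    disc n Z = (n : ℝ) / 2 ^ n * Nat.choose (n - 1) ((n - 1) / 2) :=
  discrepancy_hamming_code_general m n hm hn Z hdual1 hdual2
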